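/- Fix q ≥ 2 and q ≤ i ≤ n. Let j' be the largest j in {q−1,...,i−1} minimizing max( M(q−1, j−1), R_{j(i−1)} ), and let j'' be the largest j in {q−1,...,i} minimizing max( M(q−1, j−1), R_{ji} ). Then j'' ≥ j'. -/

import Mathlib

/-- Maximum of `f` over a finite set of indices, with the empty maximum being `0`. -/
noncomputable def maxOver (S : Finset ℕ) (f : ℕ → ℝ) : ℝ := S.fold max 0 f

/-- Left evacuation time to sink `x t` of the subpath starting at `x l`, under weights `w`. -/
noncomputable def thetaL (x : ℕ → ℝ) (τ : ℝ) (w : ℕ → ℝ) (l t : ℕ) : ℝ :=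
  maxOver (Finset.Ico l t) (fun i => (x t - x i) * τ + ∑ j ∈ Finset.Icc l i, w j)

/-- Right evacuation time to sink `x t` of the subpath ending at `x r`, under weights `w`. -/
noncomputable def thetaR (x : ℕ → ℝ) (τ : ℝ) (w : ℕ → ℝ) (t r : ℕ) : ℝ :=
  maxOver (Finset.Ioc t r) (fun i => (x i - x t) * τ + ∑ j ∈ Finset.Icc i r, w j)

/-- 1-sink evacuation time `Θ¹([x_l,x_r], x_t, w)`. -/
noncomputable def theta1 (x : ℕ → ℝ) (τ : ℝ) (w : ℕ → ℝ) (l t r : ℕ) : ℝ :=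
  max (thetaL x τ w l t) (thetaR x τ w t r)

/-- A scenario assigns each vertex a weight within its bounds. -/
def IsScenario (n : ℕ) (wlo whi : ℕ → ℝ) (s : ℕ → ℝ) : Prop :=
  ∀ i, i ≤ n → wlo i ≤ s i ∧ s i ≤ whi i

/-- A `k`-partition-with-sinks of the vertex set `{0,…,n}` into `k` consecutive
nonempty blocks `{l p, …, r p}` (`p ∈ {1,…,k}`) with a sink `t p` in each block. -/
structure KPartSinks (n k : ℕ) where
  l : ℕ → ℕ
  r : ℕ → ℕ
  t : ℕ → ℕ
  first : l 1 = 0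
  last : r k = n
  consec : ∀ p, 1 ≤ p → p < k → l (p + 1) = r p + 1
  block_nonempty : ∀ p, 1 ≤ p → p ≤ k → l p ≤ r p
  sink_lb : ∀ p, 1 ≤ p → p ≤ k → l p ≤ t p
  sink_ub : ∀ p, 1 ≤ p → p ≤ k → t p ≤ r p

/-- `k`-sink evacuation time `Θᵏ(P, {P̂,Ŷ}, w)`. -/
noncomputable def thetaK {n k : ℕ} (x : ℕ → ℝ) (τ : ℝ) (PY : KPartSinks n k) (w : ℕ → ℝ) : ℝ :=
  maxOver (Finset.Icc 1 k) (fun p => theta1 x τ w (PY.l p) (PY.t p) (PY.r p))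

/-- Optimal `k`-sink evacuation time `Θᵏ_opt(P, w)`. -/
noncomputable def thetaOpt (x : ℕ → ℝ) (τ : ℝ) (n k : ℕ) (w : ℕ → ℝ) : ℝ :=
  sInf {v : ℝ | ∃ PY : KPartSinks n k, thetaK x τ PY w = v}

/-- Regret `R({P̂,Ŷ}, w)`. -/
noncomputable def regret {n k : ℕ} (x : ℕ → ℝ) (τ : ℝ) (PY : KPartSinks n k) (w : ℕ → ℝ) : ℝ :=
  thetaK x τ PY w - thetaOpt x τ n k w

/-- Max-regret `R_max({P̂,Ŷ})`. -/
noncomputable def maxRegret {n k : ℕ} (x : ℕ → ℝ) (τ : ℝ) (wlo whi : ℕ → ℝ)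
    (PY : KPartSinks n k) : ℝ :=
  sSup {v : ℝ | ∃ s : ℕ → ℝ, IsScenario n wlo whi s ∧ regret x τ PY s = v}

/-- A worst-case scenario: a scenario attaining the max-regret. -/
def IsWorstCase {n k : ℕ} (x : ℕ → ℝ) (τ : ℝ) (wlo whi : ℕ → ℝ) (PY : KPartSinks n k)
    (s : ℕ → ℝ) : Prop :=
  IsScenario n wlo whi s ∧ regret x τ PY s = maxRegret x τ wlo whi PY

/-- `d` is the index of the dominant part of `{P̂,Ŷ}` under weights `w`:
the smallest index attaining `max_p Θ¹(P_p, y_p, w)`. -/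
def IsDominant {n k : ℕ} (x : ℕ → ℝ) (τ : ℝ) (PY : KPartSinks n k) (w : ℕ → ℝ) (d : ℕ) : Prop :=
  1 ≤ d ∧ d ≤ k ∧
  (∀ p, 1 ≤ p → p ≤ k →
    theta1 x τ w (PY.l p) (PY.t p) (PY.r p) ≤ theta1 x τ w (PY.l d) (PY.t d) (PY.r d)) ∧
  (∀ p, 1 ≤ p → p < d →
    theta1 x τ w (PY.l p) (PY.t p) (PY.r p) < theta1 x τ w (PY.l d) (PY.t d) (PY.r d))

/-- `R_{lr}(x_t)`: the max-regret of the subpath `[x_l,x_r]` as assumed dominant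
part with sink `x_t`. -/
noncomputable def Rsink (x : ℕ → ℝ) (τ : ℝ) (wlo whi : ℕ → ℝ) (n k : ℕ) (l r t : ℕ) : ℝ :=
  sSup {v : ℝ | ∃ s : ℕ → ℝ, IsScenario n wlo whi s ∧
    theta1 x τ s l t r - thetaOpt x τ n k s = v}

/-- `R_{lr}`: the minimax regret of the subpath `[x_l,x_r]` as assumed dominant part. -/
noncomputable def Rlr (x : ℕ → ℝ) (τ : ℝ) (wlo whi : ℕ → ℝ) (n k : ℕ) (l r : ℕ) : ℝ :=
  sInf {v : ℝ | ∃ t, l ≤ t ∧ t ≤ r ∧ Rsink x τ wlo whi n k l r t = v}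

/-- A partition of `{0,…,i}` into `q` consecutive nonempty blocks `{l p, …, r p}`. -/
def IsQPartition (q i : ℕ) (l r : ℕ → ℕ) : Prop :=
  l 1 = 0 ∧ r q = i ∧ (∀ p, 1 ≤ p → p < q → l (p + 1) = r p + 1) ∧
  (∀ p, 1 ≤ p → p ≤ q → l p ≤ r p)

/-- `M(q, i)`: the minimum over partitions of `{0,…,i}` into `q` consecutive
nonempty blocks of `max_p R_{l_p r_p}`. -/
noncomputable def Mreg (x : ℕ → ℝ) (τ : ℝ) (wlo whi : ℕ → ℝ) (n k : ℕ) (q i : ℕ) : ℝ :=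
  sInf {v : ℝ | ∃ lf rf : ℕ → ℕ, IsQPartition q i lf rf ∧
    maxOver (Finset.Icc 1 q) (fun p => Rlr x τ wlo whi n k (lf p) (rf p)) = v}

/-- Left-dominant scenario on `{l,…,r}`. -/
def LeftDominant (wlo whi s : ℕ → ℝ) (l r : ℕ) : Prop :=
  ∃ i, l ≤ i ∧ i ≤ r + 1 ∧ (∀ j, l ≤ j → j < i → s j = whi j) ∧
    (∀ j, i ≤ j → j ≤ r → s j = wlo j)

/-- Right-dominant scenario on `{l,…,r}`. -/
def RightDominant (wlo whi s : ℕ → ℝ) (l r : ℕ) : Prop :=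
  ∃ i, l ≤ i ∧ i ≤ r + 1 ∧ (∀ j, l ≤ j → j < i → s j = wlo j) ∧
    (∀ j, i ≤ j → j ≤ r → s j = whi j)

/-!
Enlarging a block, with a suitably moved sink, can only increase its evacuation time in every
scenario, while `Θ_opt` does not depend on the block; hence `R_{lr}` is antitone in `l` and
monotone in `r`. If the largest minimiser `j''` for `i` were smaller than the minimiser `j'` for
`i - 1`, then `max (M (q-1) (j'-1)) (R_{j' i}) ≤ max (M (q-1) (j''-1)) (R_{j'' i})`, so `j'` would
also be a minimiser for `i`, contradicting the maximality of `j''`.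
-/

open Finset

section MaxOver

lemma maxOver_nonneg (S : Finset ℕ) (f : ℕ → ℝ) : 0 ≤ maxOver S f :=
  (Finset.le_fold_max _).2 (Or.inl le_rfl)

lemma le_maxOver {S : Finset ℕ} {f : ℕ → ℝ} {a : ℕ} (h : a ∈ S) : f a ≤ maxOver S f :=
  (Finset.le_fold_max _).2 (Or.inr ⟨a, h, le_rfl⟩)

lemma maxOver_le {S : Finset ℕ} {f : ℕ → ℝ} {b : ℝ} (hb : 0 ≤ b) (h : ∀ a ∈ S, f a ≤ b) :
    maxOver S f ≤ b :=
  (Finset.fold_max_le _).2 ⟨hb, h⟩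

lemma maxOver_le_maxOver {S T : Finset ℕ} {f g : ℕ → ℝ} (h : ∀ a ∈ S, ∃ b ∈ T, f a ≤ g b) :
    maxOver S f ≤ maxOver T g :=
  maxOver_le (maxOver_nonneg T g) fun a ha =>
    let ⟨_, hb, hab⟩ := h a ha
    hab.trans (le_maxOver hb)

end MaxOver

section EvacuationTime

variable {x : ℕ → ℝ} {τ : ℝ} {s s' : ℕ → ℝ}

lemma thetaL_self (l : ℕ) : thetaL x τ s l l = 0 := by
  simp [thetaL, maxOver]

lemma thetaR_self (t : ℕ) : thetaR x τ s t t = 0 := by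
  simp [thetaR, maxOver]

lemma theta1_nonneg (l t r : ℕ) : 0 ≤ theta1 x τ s l t r :=
  le_max_of_le_left (maxOver_nonneg _ _)

lemma thetaL_mono_weights {l t : ℕ} (h : ∀ j < t, s j ≤ s' j) :
    thetaL x τ s l t ≤ thetaL x τ s' l t :=
  maxOver_le_maxOver fun a ha => ⟨a, ha, add_le_add_right (sum_le_sum fun j hj =>
    h j (by grind)) _⟩

lemma thetaR_mono_weights {t r : ℕ} (h : ∀ j ≤ r, s j ≤ s' j) :
    thetaR x τ s t r ≤ thetaR x τ s' t r :=
  maxOver_le_maxOver fun a ha => ⟨a, ha, add_le_add_right (sum_le_sum fun j hj =>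
    h j (mem_Icc.1 hj).2) _⟩

lemma theta1_mono_weights {l t r : ℕ} (htr : t ≤ r) (h : ∀ j ≤ r, s j ≤ s' j) :
    theta1 x τ s l t r ≤ theta1 x τ s' l t r :=
  max_le_max (thetaL_mono_weights fun j hj => h j (by omega)) (thetaR_mono_weights h)

lemma thetaL_anti_left {l l' t : ℕ} (hs : ∀ j < t, 0 ≤ s j) (hl : l ≤ l') :
    thetaL x τ s l' t ≤ thetaL x τ s l t :=
  maxOver_le_maxOver fun a ha => ⟨a, by grind, add_le_add_right
    (sum_le_sum_of_subset_of_nonneg (Icc_subset_Icc_left hl) fun j hj _ =>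
      hs j (by grind)) _⟩

lemma thetaR_mono_right {t r : ℕ} (hs : 0 ≤ s (r + 1)) :
    thetaR x τ s t r ≤ thetaR x τ s t (r + 1) :=
  maxOver_le_maxOver fun a ha => ⟨a, by grind, add_le_add_right (by
    rw [sum_Icc_succ_top (by grind)]
    linarith) _⟩

lemma thetaL_mono_sink (hτ : 0 ≤ τ) {l t t' : ℕ} (ht : t ≤ t') (hx : x t ≤ x t') :
    thetaL x τ s l t ≤ thetaL x τ s l t' :=
  maxOver_le_maxOver fun a ha => ⟨a, by grind, by nlinarith⟩

lemma thetaR_anti_sink (hτ : 0 ≤ τ) {t t' r : ℕ} (ht : t ≤ t') (hx : x t ≤ x t') :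
    thetaR x τ s t' r ≤ thetaR x τ s t r :=
  maxOver_le_maxOver fun a ha => ⟨a, by grind, by nlinarith⟩

lemma theta1_shrink_left (hτ : 0 ≤ τ) {l l' t r : ℕ} (hx : MonotoneOn x (Set.Iic r))
    (hs : ∀ j < t, 0 ≤ s j) (hl : l ≤ l') (hl'r : l' ≤ r) (htr : t ≤ r) :
    theta1 x τ s l' (max t l') r ≤ theta1 x τ s l t r := by
  rcases le_or_gt l' t with h | h
  · rw [max_eq_left h]
    exact max_le_max (thetaL_anti_left hs hl) le_rfl
  · rw [max_eq_right h.le, theta1, thetaL_self]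
    exact max_le (theta1_nonneg _ _ _) (le_max_of_le_right (thetaR_anti_sink hτ h.le
      (hx (Set.mem_Iic.2 htr) (Set.mem_Iic.2 hl'r) h.le)))

lemma theta1_shrink_right (hτ : 0 ≤ τ) {l t r : ℕ} (hx : x r ≤ x (r + 1)) (hs : 0 ≤ s (r + 1))
    (ht : t ≤ r + 1) :
    theta1 x τ s l (min t r) r ≤ theta1 x τ s l t (r + 1) := by
  rcases le_or_gt t r with h | h
  · rw [min_eq_left h]
    exact max_le_max le_rfl (thetaR_mono_right hs)
  · obtain rfl : t = r + 1 := by omega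
    rw [min_eq_right (Nat.le_succ r), theta1, thetaR_self]
    exact max_le (le_max_of_le_left (thetaL_mono_sink hτ (Nat.le_succ r) hx))
      (theta1_nonneg _ _ _)

end EvacuationTime

section Regret

variable {n k : ℕ} {x : ℕ → ℝ} {τ : ℝ} {wlo whi : ℕ → ℝ}

lemma thetaOpt_nonneg (s : ℕ → ℝ) : 0 ≤ thetaOpt x τ n k s :=
  Real.sInf_nonneg fun _ ⟨_, hPY⟩ => hPY ▸ maxOver_nonneg _ _

lemma Rsink_le_Rsink (hw : ∀ i ≤ n, wlo i ≤ whi i) {l₁ t₁ r₁ l₂ t₂ r₂ : ℕ} (ht₂ : t₂ ≤ r₂)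
    (hr₂ : r₂ ≤ n)
    (H : ∀ s, IsScenario n wlo whi s → theta1 x τ s l₁ t₁ r₁ ≤ theta1 x τ s l₂ t₂ r₂) :
    Rsink x τ wlo whi n k l₁ r₁ t₁ ≤ Rsink x τ wlo whi n k l₂ r₂ t₂ := by
  -- `whi` is the heaviest scenario, which bounds the regrets from above
  have hbdd : BddAbove {v : ℝ | ∃ s, IsScenario n wlo whi s ∧
      theta1 x τ s l₂ t₂ r₂ - thetaOpt x τ n k s = v} := by
    refine ⟨theta1 x τ whi l₂ t₂ r₂, ?_⟩
    rintro _ ⟨s, hs, rfl⟩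
    have := theta1_mono_weights (x := x) (τ := τ) (l := l₂) ht₂
      fun j hj => (hs j (hj.trans hr₂)).2
    linarith [thetaOpt_nonneg (x := x) (τ := τ) (n := n) (k := k) s]
  refine csSup_le ⟨_, wlo, fun i hi => ⟨le_rfl, hw i hi⟩, rfl⟩ ?_
  rintro _ ⟨s, hs, rfl⟩
  exact (sub_le_sub_right (H s hs) _).trans (le_csSup hbdd ⟨s, hs, rfl⟩)

lemma Rlr_le_Rlr {l₁ r₁ l₂ r₂ : ℕ} (hlr₂ : l₂ ≤ r₂)
    (H : ∀ t, l₂ ≤ t → t ≤ r₂ → ∃ t', l₁ ≤ t' ∧ t' ≤ r₁ ∧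
      Rsink x τ wlo whi n k l₁ r₁ t' ≤ Rsink x τ wlo whi n k l₂ r₂ t) :
    Rlr x τ wlo whi n k l₁ r₁ ≤ Rlr x τ wlo whi n k l₂ r₂ := by
  have hbdd : BddBelow {v : ℝ | ∃ t, l₁ ≤ t ∧ t ≤ r₁ ∧ Rsink x τ wlo whi n k l₁ r₁ t = v} := by
    refine (((Set.finite_Icc l₁ r₁).image (Rsink x τ wlo whi n k l₁ r₁)).bddBelow).mono ?_
    rintro _ ⟨t, ht₁, ht₂, rfl⟩
    exact ⟨t, ⟨ht₁, ht₂⟩, rfl⟩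
  refine le_csInf ⟨_, l₂, le_rfl, hlr₂, rfl⟩ ?_
  rintro _ ⟨t, ht₁, ht₂, rfl⟩
  obtain ⟨t', h₁, h₂, hle⟩ := H t ht₁ ht₂
  exact (csInf_le hbdd ⟨t', h₁, h₂, rfl⟩).trans hle

variable (hx : MonotoneOn x (Set.Iic n)) (hτ : 0 ≤ τ) (hw : ∀ i ≤ n, 0 ≤ wlo i ∧ wlo i ≤ whi i)
include hx hτ hw

lemma Rlr_anti_left {l l' r : ℕ} (hl : l ≤ l') (hl'r : l' ≤ r) (hr : r ≤ n) :
    Rlr x τ wlo whi n k l' r ≤ Rlr x τ wlo whi n k l r :=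
  Rlr_le_Rlr (hl.trans hl'r) fun t _ htr =>
    ⟨max t l', le_max_right _ _, max_le htr hl'r, Rsink_le_Rsink (fun i hi => (hw i hi).2) htr hr
      fun s hs => theta1_shrink_left hτ (hx.mono (Set.Iic_subset_Iic.2 hr))
        (fun j hj => (hw j (by omega)).1.trans (hs j (by omega)).1) hl hl'r htr⟩

lemma Rlr_mono_right {l r : ℕ} (hl : l ≤ r) (hr : r + 1 ≤ n) :
    Rlr x τ wlo whi n k l r ≤ Rlr x τ wlo whi n k l (r + 1) :=
  Rlr_le_Rlr (hl.trans (Nat.le_succ r)) fun t hlt htr =>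
    ⟨min t r, le_min hlt hl, min_le_right _ _, Rsink_le_Rsink (fun i hi => (hw i hi).2) htr hr
      fun s hs => theta1_shrink_right hτ
        (hx (Set.mem_Iic.2 (by omega)) (Set.mem_Iic.2 hr) (Nat.le_succ r))
        ((hw _ hr).1.trans (hs _ hr).1) htr⟩

end Regret

theorem stmt_13_general (n k : ℕ) (x : ℕ → ℝ) (τ : ℝ) (wlo whi : ℕ → ℝ)
    (hx : ∀ i, i < n → x i < x (i + 1)) (hτ : 0 < τ)
    (hw : ∀ i, i ≤ n → 0 < wlo i ∧ wlo i ≤ whi i)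
    (q i j' j'' : ℕ) (hi2 : i ≤ n)
    (hj'lb : q - 1 ≤ j') (hj'le : j' ≤ i - 1)
    (hj'min : ∀ j, q - 1 ≤ j → j ≤ i - 1 →
      max (Mreg x τ wlo whi n k (q - 1) (j' - 1)) (Rlr x τ wlo whi n k j' (i - 1)) ≤
      max (Mreg x τ wlo whi n k (q - 1) (j - 1)) (Rlr x τ wlo whi n k j (i - 1)))
    (hj''lb : q - 1 ≤ j'')
    (hj''min : ∀ j, q - 1 ≤ j → j ≤ i →
      max (Mreg x τ wlo whi n k (q - 1) (j'' - 1)) (Rlr x τ wlo whi n k j'' i) ≤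
      max (Mreg x τ wlo whi n k (q - 1) (j - 1)) (Rlr x τ wlo whi n k j i))
    (hj''big : ∀ j, q - 1 ≤ j → j ≤ i →
      max (Mreg x τ wlo whi n k (q - 1) (j - 1)) (Rlr x τ wlo whi n k j i) =
        max (Mreg x τ wlo whi n k (q - 1) (j'' - 1)) (Rlr x τ wlo whi n k j'' i) →
      j ≤ j'') :
    j' ≤ j'' := by
  by_contra! hlt
  have hx' : MonotoneOn x (Set.Iic n) := (strictMonoOn_Iic_of_lt_succ hx).monotoneOn
  have hw' : ∀ i ≤ n, 0 ≤ wlo i ∧ wlo i ≤ whi i := fun i hi => ⟨(hw i hi).1.le, (hw i hi).2⟩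
  set M := fun j => Mreg x τ wlo whi n k (q - 1) (j - 1)
  set R := Rlr x τ wlo whi n k
  have hright : R j'' (i - 1) ≤ R j'' i := by
    have h := Rlr_mono_right (k := k) hx' hτ.le hw' (l := j'') (r := i - 1) (by omega) (by omega)
    rwa [Nat.sub_add_cancel (by omega)] at h
  have hleft : R j' i ≤ R j'' i := Rlr_anti_left hx' hτ.le hw' hlt.le (by omega) hi2
  have hM : M j' ≤ max (M j'') (R j'' i) :=
    calc M j' ≤ max (M j') (R j' (i - 1)) := le_max_left _ _
      _ ≤ max (M j'') (R j'' (i - 1)) := hj'min j'' hj''lb (by omega)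
      _ ≤ max (M j'') (R j'' i) := max_le_max le_rfl hright
  have hsame : max (M j') (R j' i) = max (M j'') (R j'' i) :=
    le_antisymm (max_le hM (hleft.trans (le_max_right _ _))) (hj''min j' hj'lb (by omega))
  exact absurd (hj''big j' hj'lb (by omega) hsame) (not_le.2 hlt)

/-- the largest minimizing index `j` of
`max(M(q−1, j−1), R_{ji})` cannot decrease when `i` is incremented. -/
theorem stmt_13 (n k : ℕ) (x : ℕ → ℝ) (τ : ℝ) (wlo whi : ℕ → ℝ)
    (hx : ∀ i, i < n → x i < x (i + 1)) (hτ : 0 < τ)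
    (hw : ∀ i, i ≤ n → 0 < wlo i ∧ wlo i ≤ whi i) (hk : 1 ≤ k)
    (q i j' j'' : ℕ) (hq : 2 ≤ q) (hi1 : q ≤ i) (hi2 : i ≤ n)
    (hj'lb : q - 1 ≤ j') (hj'le : j' ≤ i - 1)
    (hj'min : ∀ j, q - 1 ≤ j → j ≤ i - 1 →
      max (Mreg x τ wlo whi n k (q - 1) (j' - 1)) (Rlr x τ wlo whi n k j' (i - 1)) ≤
      max (Mreg x τ wlo whi n k (q - 1) (j - 1)) (Rlr x τ wlo whi n k j (i - 1)))
    (hj'big : ∀ j, q - 1 ≤ j → j ≤ i - 1 →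
      max (Mreg x τ wlo whi n k (q - 1) (j - 1)) (Rlr x τ wlo whi n k j (i - 1)) =
        max (Mreg x τ wlo whi n k (q - 1) (j' - 1)) (Rlr x τ wlo whi n k j' (i - 1)) →
      j ≤ j')
    (hj''lb : q - 1 ≤ j'') (hj''le : j'' ≤ i)
    (hj''min : ∀ j, q - 1 ≤ j → j ≤ i →
      max (Mreg x τ wlo whi n k (q - 1) (j'' - 1)) (Rlr x τ wlo whi n k j'' i) ≤
      max (Mreg x τ wlo whi n k (q - 1) (j - 1)) (Rlr x τ wlo whi n k j i))
    (hj''big : ∀ j, q - 1 ≤ j → j ≤ i →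
      max (Mreg x τ wlo whi n k (q - 1) (j - 1)) (Rlr x τ wlo whi n k j i) =
        max (Mreg x τ wlo whi n k (q - 1) (j'' - 1)) (Rlr x τ wlo whi n k j'' i) →
      j ≤ j'') :
    j' ≤ j'' :=
  stmt_13_general n k x τ wlo whi hx hτ hw q i j' j'' hi2 hj'lb hj'le hj'min hj''lb hj''min hj''big
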